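/- For every dyadic interval C of generation n with left or right half C^j (j ∈ {0,1}), the Thue–Morse measure satisfies ν(C) ≥ 2^{-n-1} inf_{y ∈ C^j} exp(ψ_n(y)). -/

import Mathlib

/-!
The measures `P_N dx` on `[0, 1]` are probability measures converging weakly to `ν`, so by the
portmanteau theorem `ν(C) ≥ limsup_N ∫_C P_N` for the closed interval `C`. Since
`P_{n+m}(x) = P_n(x) P_m(2ⁿx)` and `exp ψ_n = P_n` off the dyadic points of generation `n + 1`,
`∫_{Cʲ} P_{n+m} ≥ (inf_{Cʲ} exp ψ_n) ∫_{Cʲ} P_m(2ⁿx) dx`, and the last integral is `2^{-n-1}`: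
`P_m` is `1`-periodic, `∫₀¹ P_m = 1`, and `P_m(1 - x) = P_m(x)` splits this mass evenly between
the two halves of `[0, 1]`.
-/

open MeasureTheory

noncomputable def P (n : ℕ) (x : ℝ) : ℝ :=
  ∏ ℓ ∈ Finset.range n, (1 - Real.cos (2 * Real.pi * 2 ^ ℓ * x))

noncomputable def psi (x : ℝ) : ℝ := Real.log (1 - Real.cos (2 * Real.pi * x))

noncomputable def psiSum (n : ℕ) (x : ℝ) : ℝ :=
  ∑ ℓ ∈ Finset.range n, psi (Int.fract ((2:ℝ) ^ ℓ * x))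

open Real Set Filter Topology

lemma P_nonneg (n : ℕ) (x : ℝ) : 0 ≤ P n x :=
  Finset.prod_nonneg fun _ _ => sub_nonneg.2 (cos_le_one _)

lemma continuous_P (n : ℕ) : Continuous (P n) := by
  unfold P
  fun_prop

lemma intervalIntegrable_P (n : ℕ) (a b : ℝ) : IntervalIntegrable (P n) volume a b :=
  (continuous_P n).intervalIntegrable a b

lemma P_periodic (n : ℕ) : Function.Periodic (P n) 1 := fun x => by
  refine Finset.prod_congr rfl fun ℓ _ => ?_
  rw [show 2 * π * 2 ^ ℓ * (x + 1) = 2 * π * 2 ^ ℓ * x + ((2 ^ ℓ : ℕ) : ℤ) * (2 * π) by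
    push_cast; ring, cos_add_int_mul_two_pi]

lemma P_neg (n : ℕ) (x : ℝ) : P n (-x) = P n x :=
  Finset.prod_congr rfl fun ℓ _ => by rw [mul_neg, cos_neg]

lemma P_one_sub (n : ℕ) (x : ℝ) : P n (1 - x) = P n x := by
  rw [sub_eq_neg_add, P_periodic, P_neg]

lemma P_add (n m : ℕ) (x : ℝ) : P (n + m) x = P n x * P m (2 ^ n * x) := by
  simp only [P, Finset.prod_range_add, pow_add]
  congr 1
  exact Finset.prod_congr rfl fun ℓ _ => by ring_nf

lemma P_succ (n : ℕ) (x : ℝ) : P (n + 1) x = (1 - cos (2 * π * x)) * P n (2 * x) := by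
  rw [add_comm, P_add, pow_one]
  simp [P]

lemma Function.Antiperiodic.intervalIntegral_add_two_mul_eq_zero {f : ℝ → ℝ} {c : ℝ}
    (hf : Function.Antiperiodic f c) (hfi : ∀ a b, IntervalIntegrable f volume a b) (t : ℝ) :
    ∫ x in t..t + 2 * c, f x = 0 := by
  have hshift : ∫ x in t + c..t + 2 * c, f x = -∫ x in t..t + c, f x := by
    rw [← intervalIntegral.integral_neg, ← funext hf, intervalIntegral.integral_comp_add_right]
    ring_nf
  rw [← intervalIntegral.integral_add_adjacent_intervals (hfi t (t + c)) (hfi _ _), hshift,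
    add_neg_cancel]

lemma integral_P_zero_one (n : ℕ) : ∫ x in (0:ℝ)..1, P n x = 1 := by
  induction n with
  | zero => simp [P]
  | succ n ih =>
    have hint : ∀ f : ℝ → ℝ, Continuous f → ∀ a b, IntervalIntegrable f volume a b :=
      fun f hf => hf.intervalIntegrable
    have hcont : Continuous fun x => P n (2 * x) := (continuous_P n).comp (by fun_prop)
    have hdilate : ∫ x in (0:ℝ)..1, P n (2 * x) = 1 := by
      have h := (P_periodic n).intervalIntegral_add_zsmul_eq 2 0 (intervalIntegrable_P n)
      rw [intervalIntegral.integral_comp_mul_left _ two_ne_zero]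
      norm_num at h ⊢
      rw [h, ih]
      norm_num
    have hcos : ∫ x in (0:ℝ)..1, cos (2 * π * x) * P n (2 * x) = 0 := by
      have hanti : Function.Antiperiodic (fun x => cos (2 * π * x) * P n (2 * x)) (1 / 2) :=
        fun x => by
          dsimp only
          rw [show 2 * π * (x + 1 / 2) = 2 * π * x + π by ring, cos_add_pi,
            show 2 * (x + 1 / 2) = 2 * x + 1 by ring, P_periodic, neg_mul]
      simpa using hanti.intervalIntegral_add_two_mul_eq_zero
        (hint _ ((by fun_prop : Continuous fun x => cos (2 * π * x)).mul hcont)) 0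
    simp_rw [P_succ, sub_mul, one_mul]
    rw [intervalIntegral.integral_sub (hint _ hcont _ _) (hint _ (by fun_prop) _ _), hdilate, hcos,
      sub_zero]

lemma integral_P_half (n : ℕ) {j : ℕ} (hj : j < 2) :
    ∫ x in (j / 2 : ℝ)..(j + 1) / 2, P n x = 1 / 2 := by
  have hsum := intervalIntegral.integral_add_adjacent_intervals
    (intervalIntegrable_P n 0 (1 / 2)) (intervalIntegrable_P n (1 / 2) 1)
  have hsymm : ∫ x in (1 / 2 : ℝ)..1, P n x = ∫ x in (0 : ℝ)..1 / 2, P n x := by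
    conv_rhs => rw [← funext (P_one_sub n), intervalIntegral.integral_comp_sub_left]
    norm_num
  rw [integral_P_zero_one, hsymm] at hsum
  interval_cases j <;> norm_num <;> linarith

lemma integral_P_comp_dyadic (m n k : ℕ) {j : ℕ} (hj : j < 2) :
    ∫ x in (2 * k + j : ℝ) / 2 ^ (n + 1)..(2 * k + j + 1) / 2 ^ (n + 1), P m (2 ^ n * x)
      = (1 / 2) ^ (n + 1) := by
  have h2n : (2 : ℝ) ^ n ≠ 0 := by positivity
  have hends : ∀ i : ℝ, (2 : ℝ) ^ n * ((2 * k + i) / 2 ^ (n + 1)) = i / 2 + k := fun i => by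
    field_simp
    ring
  rw [intervalIntegral.integral_comp_mul_left _ h2n, hends, add_assoc, hends,
    ← intervalIntegral.integral_comp_add_right]
  simp only [by simpa using (P_periodic m).nat_mul k, integral_P_half m hj, smul_eq_mul]
  rw [pow_succ, one_div_pow, one_div (2 ^ n)]

lemma exp_psi_fract {t : ℝ} (ht : ∀ m : ℤ, t ≠ m) :
    exp (psi (Int.fract t)) = 1 - cos (2 * π * t) := by
  have hcos : cos (2 * π * Int.fract t) = cos (2 * π * t) := by
    rw [Int.fract, mul_sub, mul_comm (2 * π) (⌊t⌋ : ℝ), cos_sub_int_mul_two_pi]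
  have hlt : cos (2 * π * t) < 1 := by
    refine (cos_le_one _).lt_of_ne fun h => ?_
    obtain ⟨m, hm⟩ := (cos_eq_one_iff _).1 h
    exact ht m (by nlinarith [pi_pos])
  rw [psi, hcos, exp_log (sub_pos.2 hlt)]

lemma two_pow_mul_ne_int {g ℓ : ℕ} (hℓ : ℓ ≤ g) {y : ℝ} (hy : ∀ m : ℤ, 2 ^ g * y ≠ m)
    (q : ℤ) : 2 ^ ℓ * y ≠ q := fun h => hy (2 ^ (g - ℓ) * q) <| by
  push_cast
  rw [← h, ← mul_assoc, ← pow_add, Nat.sub_add_cancel hℓ]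

lemma exp_psiSum {n g : ℕ} (hg : n ≤ g) {y : ℝ} (hy : ∀ m : ℤ, 2 ^ g * y ≠ m) :
    exp (psiSum n y) = P n y := by
  rw [psiSum, exp_sum]
  refine Finset.prod_congr rfl fun ℓ hℓ => ?_
  rw [exp_psi_fract (two_pow_mul_ne_int ((Finset.mem_range.1 hℓ).le.trans hg) hy), ← mul_assoc]

lemma ne_int_of_mem_Ioo {t : ℝ} {m : ℤ} (ht : t ∈ Ioo (m : ℝ) (m + 1)) (q : ℤ) : t ≠ q := by
  rintro rfl
  obtain ⟨h₁, h₂⟩ := ht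
  norm_cast at h₁ h₂
  omega

noncomputable def measureP (N : ℕ) : Measure ℝ :=
  (volume.restrict (Ioc 0 1)).withDensity fun x => ENNReal.ofReal (P N x)

lemma lintegral_ofReal_P (N : ℕ) {a b : ℝ} (hab : a ≤ b) :
    ∫⁻ x in Ioc a b, ENNReal.ofReal (P N x) = ENNReal.ofReal (∫ x in a..b, P N x) := by
  rw [intervalIntegral.integral_of_le hab, ofReal_integral_eq_lintegral_ofReal
    (intervalIntegrable_P N a b).1 (Eventually.of_forall (P_nonneg N))]

lemma measureP_Ioc (N : ℕ) {a b : ℝ} (ha : 0 ≤ a) (hab : a ≤ b) (hb : b ≤ 1) :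
    measureP N (Ioc a b) = ENNReal.ofReal (∫ x in a..b, P N x) := by
  rw [measureP, withDensity_apply _ measurableSet_Ioc, Measure.restrict_restrict measurableSet_Ioc,
    inter_eq_left.2 (Ioc_subset_Ioc ha hb), lintegral_ofReal_P N hab]

instance (N : ℕ) : IsProbabilityMeasure (measureP N) where
  measure_univ := by
    rw [measureP, withDensity_apply _ MeasurableSet.univ, Measure.restrict_univ,
      lintegral_ofReal_P N zero_le_one, integral_P_zero_one, ENNReal.ofReal_one]

lemma integral_measureP (N : ℕ) (f : ℝ → ℝ) :
    ∫ x, f x ∂measureP N = ∫ x in (0:ℝ)..1, f x * P N x := by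
  rw [measureP, integral_withDensity_eq_integral_toReal_smul
    (continuous_P N).measurable.ennreal_ofReal
    (Eventually.of_forall fun _ => ENNReal.ofReal_lt_top),
    intervalIntegral.integral_of_le zero_le_one]
  refine setIntegral_congr_fun measurableSet_Ioc fun x _ => ?_
  rw [ENNReal.toReal_ofReal (P_nonneg N x), smul_eq_mul, mul_comm]

lemma limsup_measureP_le {ν : Measure ℝ} [IsProbabilityMeasure ν]
    (hν : ∀ f : ℝ → ℝ, Continuous f →
      Tendsto (fun N => ∫ x in (0:ℝ)..1, f x * P N x) atTop (𝓝 (∫ x, f x ∂ν)))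
    {F : Set ℝ} (hF : IsClosed F) :
    limsup (fun N => measureP N F) atTop ≤ ν F := by
  let μ : ℕ → ProbabilityMeasure ℝ := fun N => ⟨measureP N, inferInstance⟩
  have hμ : Tendsto μ atTop (𝓝 ⟨ν, inferInstance⟩) :=
    ProbabilityMeasure.tendsto_iff_forall_integral_tendsto.2 fun f => by
      simpa [μ, integral_measureP] using hν f f.continuous
  exact ProbabilityMeasure.limsup_measure_closed_le_of_tendsto hμ hF

section Dyadic

variable {n k j : ℕ}

-- Only the open interval: at its endpoints `psi` meets `log 0 = 0`, and `exp ψ_n ≠ P_n` there.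
lemma sInf_exp_psiSum_le_P :
    ∀ y ∈ Ioo ((2 * k + j : ℝ) / 2 ^ (n + 1)) ((2 * k + j + 1) / 2 ^ (n + 1)),
      sInf ((fun y => exp (psiSum n y)) ''
        Icc ((2 * k + j : ℝ) / 2 ^ (n + 1)) ((2 * k + j + 1) / 2 ^ (n + 1))) ≤ P n y := by
  intro y hy
  have hy' : 2 ^ (n + 1) * y ∈ Ioo (((2 * k + j : ℕ) : ℤ) : ℝ) (((2 * k + j : ℕ) : ℤ) + 1) := by
    rw [mem_Ioo, div_lt_iff₀' (by positivity), lt_div_iff₀' (by positivity)] at hy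
    push_cast
    exact hy
  rw [← exp_psiSum n.le_succ (ne_int_of_mem_Ioo hy')]
  exact csInf_le ⟨0, forall_mem_image.2 fun _ _ => (exp_pos _).le⟩
    (mem_image_of_mem _ (Ioo_subset_Icc_self hy))

lemma le_integral_P_dyadic (hj : j < 2) {I : ℝ}
    (hI : ∀ y ∈ Ioo ((2 * k + j : ℝ) / 2 ^ (n + 1)) ((2 * k + j + 1) / 2 ^ (n + 1)), I ≤ P n y)
    (m : ℕ) :
    (1 / 2) ^ (n + 1) * I ≤
      ∫ x in (2 * k + j : ℝ) / 2 ^ (n + 1)..(2 * k + j + 1) / 2 ^ (n + 1), P (n + m) x := by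
  have hcont : Continuous fun x => P m (2 ^ n * x) := (continuous_P m).comp (by fun_prop)
  calc (1 / 2) ^ (n + 1) * I
      = ∫ x in (2 * k + j : ℝ) / 2 ^ (n + 1)..(2 * k + j + 1) / 2 ^ (n + 1),
          I * P m (2 ^ n * x) := by
        rw [intervalIntegral.integral_const_mul, integral_P_comp_dyadic m n k hj, mul_comm]
    _ ≤ ∫ x in (2 * k + j : ℝ) / 2 ^ (n + 1)..(2 * k + j + 1) / 2 ^ (n + 1),
          P n x * P m (2 ^ n * x) :=
        intervalIntegral.integral_mono_on_of_le_Ioo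
          (div_le_div_of_nonneg_right (by linarith) (by positivity))
          ((continuous_const.mul hcont).intervalIntegrable _ _)
          (((continuous_P n).mul hcont).intervalIntegrable _ _)
          fun y hy => mul_le_mul_of_nonneg_right (hI y hy) (P_nonneg m _)
    _ = _ := by simp only [P_add]

lemma le_measureP_Icc_dyadic (hk : k < 2 ^ n) (hj : j < 2) {I : ℝ}
    (hI : ∀ y ∈ Ioo ((2 * k + j : ℝ) / 2 ^ (n + 1)) ((2 * k + j + 1) / 2 ^ (n + 1)), I ≤ P n y)
    {N : ℕ} (hN : n ≤ N) :
    ENNReal.ofReal ((1 / 2) ^ (n + 1) * I) ≤ measureP N (Icc (k / 2 ^ n) ((k + 1) / 2 ^ n)) := by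
  have hk' : (k : ℝ) + 1 ≤ 2 ^ n := by exact_mod_cast hk
  have hj' : (j : ℝ) ≤ 1 := by exact_mod_cast Nat.lt_succ_iff.1 hj
  have hsub : Ioc ((2 * k + j : ℝ) / 2 ^ (n + 1)) ((2 * k + j + 1) / 2 ^ (n + 1)) ⊆
      Icc (k / 2 ^ n) ((k + 1) / 2 ^ n) := by
    have h2n : (0 : ℝ) < 2 ^ n := by positivity
    refine Ioc_subset_Icc_self.trans (Icc_subset_Icc ?_ ?_) <;>
      rw [div_le_div_iff₀ (by positivity) (by positivity), pow_succ] <;>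
      nlinarith [(Nat.cast_nonneg j : (0 : ℝ) ≤ j)]
  obtain ⟨m, rfl⟩ := Nat.exists_eq_add_of_le hN
  calc ENNReal.ofReal ((1 / 2) ^ (n + 1) * I)
      ≤ ENNReal.ofReal (∫ x in (2 * k + j : ℝ) / 2 ^ (n + 1)..(2 * k + j + 1) / 2 ^ (n + 1),
          P (n + m) x) := ENNReal.ofReal_le_ofReal (le_integral_P_dyadic hj hI m)
    _ = measureP (n + m) (Ioc ((2 * k + j : ℝ) / 2 ^ (n + 1)) ((2 * k + j + 1) / 2 ^ (n + 1))) :=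
        (measureP_Ioc _ (by positivity)
          (div_le_div_of_nonneg_right (by linarith) (by positivity)) (by
          rw [div_le_one (by positivity), pow_succ]; linarith)).symm
    _ ≤ _ := measure_mono hsub

end Dyadic

theorem nu_cylinder_lower_bound (ν : Measure ℝ) [IsProbabilityMeasure ν]
    (hν : ∀ f : ℝ → ℝ, Continuous f →
      Filter.Tendsto (fun N => ∫ x in (0:ℝ)..1, f x * P N x) Filter.atTop
        (nhds (∫ x, f x ∂ν))) :
    ∀ n k j : ℕ, k < 2^n → j < 2 →
      (ν (Set.Icc ((k:ℝ) / 2^n) ((k+1 : ℝ) / 2^n))).toReal ≥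
        (1/2)^(n+1) * sInf ((fun y => Real.exp (psiSum n y)) ''
          Set.Icc ((2*k+j : ℝ) / 2^(n+1)) ((2*k+j+1 : ℝ) / 2^(n+1))) := by
  intro n k j hk hj
  have hlim := (le_limsup_of_frequently_le' ((eventually_ge_atTop n).mono fun N hN =>
    le_measureP_Icc_dyadic hk hj sInf_exp_psiSum_le_P hN).frequently).trans
    (limsup_measureP_le hν isClosed_Icc)
  exact (ENNReal.ofReal_le_iff_le_toReal (measure_ne_top _ _)).1 hlim
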